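/- Let (M,d) be a metric space and μ ∈ F̃(M). A molecular representation μ = Σ_{j=1}^n r_j (δ_{x_j} − δ_{y_j}) is optimal (i.e., its transportation cost equals ‖μ‖_tc) if and only if there exists a 1-Lipschitz function f: M → ℝ such that f(x_j) − f(y_j) = d(x_j,y_j) for every j = 1,…,n. -/

import Mathlib

open scoped BigOperators Classical Pointwise

/-- `μ` admits the molecular representation `μ = ∑ j, r j • (δ_{x j} - δ_{y j})`
with positive coefficients and distinct endpoints. -/
def IsMolRep {M : Type*} (μ : M → ℝ) {n : ℕ} (r : Fin n → ℝ) (x y : Fin n → M) : Prop :=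
  (∀ j, 0 < r j) ∧ (∀ j, x j ≠ y j) ∧
    ∀ m, μ m = ∑ j, r j * ((if x j = m then (1 : ℝ) else 0) - (if y j = m then (1 : ℝ) else 0))

/-- The transportation cost of a molecular representation. -/
def molCost {M : Type*} (d : M → M → ℝ) {n : ℕ} (r : Fin n → ℝ) (x y : Fin n → M) : ℝ :=
  ∑ j, r j * d (x j) (y j)

/-- The transportation cost norm: infimum of the costs of all molecular representations. -/
noncomputable def tcNorm {M : Type*} (d : M → M → ℝ) (μ : M → ℝ) : ℝ :=
  sInf { c | ∃ (n : ℕ) (r : Fin n → ℝ) (x y : Fin n → M), IsMolRep μ r x y ∧ c = molCost d r x y }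

section Aux

variable {M : Type*} [MetricSpace M]

/-- The set of costs of all molecular representations of `μ`. -/
def costSet (μ : M → ℝ) : Set ℝ :=
  { c | ∃ (n : ℕ) (r : Fin n → ℝ) (x y : Fin n → M), IsMolRep μ r x y ∧ c = molCost dist r x y }

lemma tcNorm_eq (μ : M → ℝ) : tcNorm dist μ = sInf (costSet μ) := rfl

lemma costSet_nonneg {μ : M → ℝ} {c : ℝ} (hc : c ∈ costSet μ) : 0 ≤ c := by
  obtain ⟨n, r, x, y, hrep, rfl⟩ := hc
  exact Finset.sum_nonneg fun j _ => mul_nonneg (hrep.1 j).le dist_nonneg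

lemma costSet_bddBelow (μ : M → ℝ) : BddBelow (costSet μ) :=
  ⟨0, fun c hc => costSet_nonneg hc⟩

omit [MetricSpace M] in
lemma isMolRep_zero : IsMolRep (0 : M → ℝ) (fun _ : Fin 0 => 1) Fin.elim0 Fin.elim0 :=
  ⟨fun j => j.elim0, fun j => j.elim0, fun m => by simp⟩

lemma zero_mem_costSet_zero : (0 : ℝ) ∈ costSet (0 : M → ℝ) :=
  ⟨0, fun _ => 1, Fin.elim0, Fin.elim0, isMolRep_zero, by simp [molCost]⟩

/-- Pairing of a molecular representation with a function. -/
lemma pairing {μ : M → ℝ} {n : ℕ} {r : Fin n → ℝ} {x y : Fin n → M}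
    (h : IsMolRep μ r x y) (f : M → ℝ) (T : Finset M)
    (hx : ∀ j, x j ∈ T) (hy : ∀ j, y j ∈ T) :
    ∑ j, r j * (f (x j) - f (y j)) = ∑ m ∈ T, μ m * f m := by
  have hsum : ∀ a : M, a ∈ T → (∑ m ∈ T, (if a = m then (1 : ℝ) else 0) * f m) = f a := by
    intro a ha
    simp [ite_mul, Finset.sum_ite_eq, ha]
  calc ∑ j, r j * (f (x j) - f (y j))
      = ∑ j, r j * ((∑ m ∈ T, (if x j = m then (1 : ℝ) else 0) * f m)
          - ∑ m ∈ T, (if y j = m then (1 : ℝ) else 0) * f m) := by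
        refine Finset.sum_congr rfl fun j _ => ?_
        rw [hsum _ (hx j), hsum _ (hy j)]
    _ = ∑ j, ∑ m ∈ T,
          r j * (((if x j = m then (1 : ℝ) else 0) - (if y j = m then (1 : ℝ) else 0)) * f m) := by
        refine Finset.sum_congr rfl fun j _ => ?_
        rw [← Finset.sum_sub_distrib, Finset.mul_sum]
        refine Finset.sum_congr rfl fun m _ => ?_
        ring
    _ = ∑ m ∈ T, ∑ j,
          r j * (((if x j = m then (1 : ℝ) else 0) - (if y j = m then (1 : ℝ) else 0)) * f m) :=
        Finset.sum_comm
    _ = ∑ m ∈ T, μ m * f m := by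
        refine Finset.sum_congr rfl fun m _ => ?_
        rw [h.2.2 m, Finset.sum_mul]
        refine Finset.sum_congr rfl fun j _ => ?_
        ring

end Aux

section Aux2

variable {M : Type*} [MetricSpace M]

omit [MetricSpace M] in
lemma isMolRep_add {g h : M → ℝ} {n m : ℕ} {r : Fin n → ℝ} {x y : Fin n → M}
    {s : Fin m → ℝ} {u v : Fin m → M} (hg : IsMolRep g r x y) (hh : IsMolRep h s u v) :
    IsMolRep (g + h) (Fin.append r s) (Fin.append x u) (Fin.append y v) := by
  refine ⟨fun j => ?_, fun j => ?_, fun a => ?_⟩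
  · refine Fin.addCases (fun i => ?_) (fun i => ?_) j <;>
      simp [Fin.append_left, Fin.append_right, hg.1, hh.1]
  · refine Fin.addCases (fun i => ?_) (fun i => ?_) j <;>
      simp [Fin.append_left, Fin.append_right, hg.2.1 _, hh.2.1 _]
  · have := Fin.sum_univ_add (fun j : Fin (n + m) =>
      Fin.append r s j * ((if Fin.append x u j = a then (1 : ℝ) else 0)
        - if Fin.append y v j = a then (1 : ℝ) else 0))
    rw [this]
    simp only [Fin.append_left, Fin.append_right]
    rw [Pi.add_apply, hg.2.2 a, hh.2.2 a]

lemma molCost_append {n m : ℕ} {r : Fin n → ℝ} {x y : Fin n → M}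
    {s : Fin m → ℝ} {u v : Fin m → M} :
    molCost dist (Fin.append r s) (Fin.append x u) (Fin.append y v)
      = molCost dist r x y + molCost dist s u v := by
  unfold molCost
  rw [Fin.sum_univ_add (fun j : Fin (n + m) =>
    Fin.append r s j * dist (Fin.append x u j) (Fin.append y v j))]
  simp only [Fin.append_left, Fin.append_right]

omit [MetricSpace M] in
lemma isMolRep_smul_pos {g : M → ℝ} {n : ℕ} {r : Fin n → ℝ} {x y : Fin n → M}
    (hg : IsMolRep g r x y) {c : ℝ} (hc : 0 < c) :
    IsMolRep (c • g) (fun j => c * r j) x y := by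
  refine ⟨fun j => mul_pos hc (hg.1 j), hg.2.1, fun a => ?_⟩
  rw [Pi.smul_apply, smul_eq_mul, hg.2.2 a, Finset.mul_sum]
  exact Finset.sum_congr rfl fun j _ => by ring

omit [MetricSpace M] in
lemma isMolRep_smul_neg {g : M → ℝ} {n : ℕ} {r : Fin n → ℝ} {x y : Fin n → M}
    (hg : IsMolRep g r x y) {c : ℝ} (hc : c < 0) :
    IsMolRep (c • g) (fun j => -c * r j) y x := by
  refine ⟨fun j => mul_pos (neg_pos.mpr hc) (hg.1 j), fun j => (hg.2.1 j).symm, fun a => ?_⟩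
  rw [Pi.smul_apply, smul_eq_mul, hg.2.2 a, Finset.mul_sum]
  exact Finset.sum_congr rfl fun j _ => by ring

/-- The submodule of functions admitting a molecular representation. -/
def molE (M : Type*) : Submodule ℝ (M → ℝ) where
  carrier := { g | ∃ (n : ℕ) (r : Fin n → ℝ) (x y : Fin n → M), IsMolRep g r x y }
  zero_mem' := ⟨0, fun _ => 1, Fin.elim0, Fin.elim0, isMolRep_zero⟩
  add_mem' := by
    rintro g h ⟨n, r, x, y, hg⟩ ⟨m, s, u, v, hh⟩
    exact ⟨n + m, _, _, _, isMolRep_add hg hh⟩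
  smul_mem' := by
    rintro c g ⟨n, r, x, y, hg⟩
    rcases lt_trichotomy c 0 with hc | hc | hc
    · exact ⟨n, _, _, _, isMolRep_smul_neg hg hc⟩
    · subst hc
      rw [zero_smul]
      exact ⟨0, fun _ => 1, Fin.elim0, Fin.elim0, isMolRep_zero⟩
    · exact ⟨n, _, _, _, isMolRep_smul_pos hg hc⟩

lemma costSet_nonempty {g : M → ℝ} (hg : g ∈ molE M) : (costSet g).Nonempty := by
  obtain ⟨n, r, x, y, hrep⟩ := hg
  exact ⟨molCost dist r x y, n, r, x, y, hrep, rfl⟩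

lemma sInf_costSet_nonneg (g : M → ℝ) : 0 ≤ sInf (costSet g) :=
  Real.sInf_nonneg fun _ hc => costSet_nonneg hc

lemma sInf_costSet_add {g h : M → ℝ} (hg : g ∈ molE M) (hh : h ∈ molE M) :
    sInf (costSet (g + h)) ≤ sInf (costSet g) + sInf (costSet h) := by
  refine le_of_forall_pos_le_add fun ε hε => ?_
  obtain ⟨c1, hc1, hlt1⟩ := Real.lt_sInf_add_pos (costSet_nonempty hg) (half_pos hε)
  obtain ⟨c2, hc2, hlt2⟩ := Real.lt_sInf_add_pos (costSet_nonempty hh) (half_pos hε)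
  obtain ⟨n, r, x, y, hrep1, rfl⟩ := hc1
  obtain ⟨m, s, u, v, hrep2, rfl⟩ := hc2
  have hmem : molCost dist r x y + molCost dist s u v ∈ costSet (g + h) :=
    ⟨n + m, _, _, _, isMolRep_add hrep1 hrep2, molCost_append.symm⟩
  have := csInf_le (costSet_bddBelow _) hmem
  linarith

lemma sInf_costSet_smul {g : M → ℝ} (hg : g ∈ molE M) {c : ℝ} (hc : 0 < c) :
    sInf (costSet (c • g)) = c * sInf (costSet g) := by
  have hset : costSet (c • g) = c • (costSet g : Set ℝ) := by
    ext t
    constructor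
    · rintro ⟨n, s, u, v, hrep, rfl⟩
      refine ⟨c⁻¹ * molCost dist s u v, ⟨n, fun j => c⁻¹ * s j, u, v, ?_, ?_⟩, ?_⟩
      · have := isMolRep_smul_pos hrep (inv_pos.mpr hc)
        rwa [smul_smul, inv_mul_cancel₀ hc.ne', one_smul] at this
      · unfold molCost
        rw [Finset.mul_sum]
        exact Finset.sum_congr rfl fun j _ => by ring
      · simp [smul_eq_mul]
        field_simp
    · rintro ⟨t', ⟨n, s, u, v, hrep, rfl⟩, rfl⟩
      refine ⟨n, fun j => c * s j, u, v, isMolRep_smul_pos hrep hc, ?_⟩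
      unfold molCost
      show c * (∑ j, s j * dist (u j) (v j)) = _
      rw [Finset.mul_sum]
      exact Finset.sum_congr rfl fun j _ => by ring
  rw [hset, Real.sInf_smul_of_nonneg hc.le, smul_eq_mul]

end Aux2
section Aux3

variable {M : Type*} [MetricSpace M]

/-- The elementary molecule `δ_a - δ_b` as a function. -/
noncomputable def deltaFn (a b : M) : M → ℝ :=
  fun m => (if a = m then (1 : ℝ) else 0) - (if b = m then (1 : ℝ) else 0)

omit [MetricSpace M] in
lemma deltaFn_self (a : M) : deltaFn a a = 0 := funext fun m => by simp [deltaFn]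

omit [MetricSpace M] in
lemma deltaFn_mem (a b : M) : deltaFn a b ∈ molE M := by
  by_cases hab : a = b
  · subst hab
    rw [deltaFn_self]
    exact (molE M).zero_mem
  · exact ⟨1, fun _ => 1, fun _ => a, fun _ => b, fun _ => one_pos, fun _ => hab,
      fun m => by simp [deltaFn]⟩

lemma sInf_costSet_deltaFn_le (a b : M) : sInf (costSet (deltaFn a b)) ≤ dist a b := by
  by_cases hab : a = b
  · subst hab
    rw [deltaFn_self, dist_self]
    exact csInf_le (costSet_bddBelow _) zero_mem_costSet_zero
  · refine csInf_le (costSet_bddBelow _)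
      ⟨1, fun _ => 1, fun _ => a, fun _ => b,
        ⟨fun _ => one_pos, fun _ => hab, fun m => by simp [deltaFn]⟩, by simp [molCost]⟩

end Aux3

/-- A molecular representation of `μ` is optimal (its cost equals the transportation cost norm)
if and only if there is a `1`-Lipschitz function `f` with `f (x j) - f (y j) = dist (x j) (y j)`
for every `j`. -/
theorem optimal_iff_lipschitz_witness {M : Type*} [MetricSpace M] (μ : M → ℝ) {n : ℕ}
    (r : Fin n → ℝ) (x y : Fin n → M) (h : IsMolRep μ r x y) :
    molCost dist r x y = tcNorm dist μ ↔
      ∃ f : M → ℝ, LipschitzWith 1 f ∧ ∀ j, f (x j) - f (y j) = dist (x j) (y j) := by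
  have hmem : molCost dist r x y ∈ costSet μ := ⟨n, r, x, y, h, rfl⟩
  constructor
  · -- forward direction
    intro hopt
    by_cases hμ : μ = 0
    · -- degenerate case
      have htc : tcNorm dist μ = 0 := by
        subst hμ
        exact le_antisymm (csInf_le (costSet_bddBelow _) zero_mem_costSet_zero)
          (sInf_costSet_nonneg _)
      have hzero : ∀ _j : Fin n, False := by
        intro j
        have hsum : molCost dist r x y = 0 := by rw [hopt, htc]
        have hterm := (Finset.sum_eq_zero_iff_of_nonneg
          (fun i _ => mul_nonneg (h.1 i).le dist_nonneg)).mp hsum j (Finset.mem_univ j)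
        have hpos : 0 < r j * dist (x j) (y j) := mul_pos (h.1 j) (dist_pos.mpr (h.2.1 j))
        exact absurd hterm hpos.ne'
      exact ⟨fun _ => 0, LipschitzWith.of_dist_le_mul fun a b => by
        simpa using mul_nonneg zero_le_one dist_nonneg, fun j => (hzero j).elim⟩
    · -- main case : Hahn-Banach
      set p : ↥(molE M) → ℝ := fun g => sInf (costSet (g : M → ℝ)) with hp
      have hμE : μ ∈ molE M := ⟨n, r, x, y, h⟩
      set μ' : ↥(molE M) := ⟨μ, hμE⟩ with hμ'def
      have hμ'ne : μ' ≠ 0 := fun hcon => hμ (congrArg Subtype.val hcon)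
      obtain ⟨G, hGext, hGle⟩ := exists_extension_of_le_sublinear
        (LinearPMap.mkSpanSingleton μ' (p μ') hμ'ne) p
        (fun c hc g => sInf_costSet_smul g.2 hc)
        (fun g h' => sInf_costSet_add g.2 h'.2)
        (by
          rintro ⟨v, hv⟩
          obtain ⟨c, hc⟩ := Submodule.mem_span_singleton.mp hv
          subst hc
          rw [LinearPMap.mkSpanSingleton'_apply, smul_eq_mul]
          rcases lt_trichotomy c 0 with hclt | hc0 | hcgt
          · exact le_trans (mul_nonpos_of_nonpos_of_nonneg hclt.le (sInf_costSet_nonneg _))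
              (sInf_costSet_nonneg _)
          · subst hc0
            rw [RingHom.id_apply, zero_mul]
            exact sInf_costSet_nonneg _
          · exact le_of_eq (sInf_costSet_smul μ'.2 hcgt).symm)
      have hGμ : G μ' = tcNorm dist μ := by
        have h1 := hGext ⟨μ', Submodule.mem_span_singleton_self μ'⟩
        rw [LinearPMap.mkSpanSingleton_apply ℝ ℝ hμ'ne (p μ')] at h1
        exact h1
      obtain ⟨m0, hm0⟩ : ∃ m0, μ m0 ≠ 0 := by
        by_contra hall
        push_neg at hall
        exact hμ (funext hall)
      set f : M → ℝ := fun a => G ⟨deltaFn a m0, deltaFn_mem a m0⟩ with hfdef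
      have hGd : ∀ a b : M, G ⟨deltaFn a b, deltaFn_mem a b⟩ ≤ dist a b :=
        fun a b => (hGle _).trans (sInf_costSet_deltaFn_le a b)
      have hdiff : ∀ a b : M, f a - f b = G ⟨deltaFn a b, deltaFn_mem a b⟩ := by
        intro a b
        rw [hfdef]
        dsimp only
        rw [← map_sub]
        congr 1
        apply Subtype.ext
        funext m
        show deltaFn a m0 m - deltaFn b m0 m = deltaFn a b m
        simp only [deltaFn]
        ring
      have hLip : LipschitzWith 1 f := by
        apply LipschitzWith.of_dist_le_mul
        intro a b
        rw [Real.dist_eq, NNReal.coe_one, one_mul]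
        refine abs_sub_le_iff.mpr ⟨?_, ?_⟩
        · exact (hdiff a b) ▸ (hGd a b)
        · rw [dist_comm]
          exact (hdiff b a) ▸ (hGd b a)
      have hrepr : μ' = ∑ j, r j •
          ((⟨deltaFn (x j) m0, deltaFn_mem _ _⟩ : ↥(molE M))
            - ⟨deltaFn (y j) m0, deltaFn_mem _ _⟩) := by
        apply Subtype.ext
        have hco : ((∑ j, r j • ((⟨deltaFn (x j) m0, deltaFn_mem _ _⟩ : ↥(molE M))
            - ⟨deltaFn (y j) m0, deltaFn_mem _ _⟩) : ↥(molE M)) : M → ℝ)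
            = ∑ j, r j • (deltaFn (x j) m0 - deltaFn (y j) m0) := by
          rw [AddSubmonoidClass.coe_finset_sum]
          rfl
        rw [hco]
        funext m
        show μ m = _
        rw [h.2.2 m, Finset.sum_apply]
        refine Finset.sum_congr rfl fun j _ => ?_
        simp only [Pi.smul_apply, Pi.sub_apply, smul_eq_mul, deltaFn]
        ring
      have hkey : G μ' = ∑ j, r j * (f (x j) - f (y j)) := by
        rw [hrepr, map_sum]
        refine Finset.sum_congr rfl fun j _ => ?_
        rw [map_smul, map_sub, smul_eq_mul]
      have hle : ∀ j, f (x j) - f (y j) ≤ dist (x j) (y j) :=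
        fun j => (hdiff (x j) (y j)) ▸ (hGd (x j) (y j))
      have hsum_eq : ∑ j, r j * (f (x j) - f (y j)) = ∑ j, r j * dist (x j) (y j) := by
        rw [← hkey, hGμ, ← hopt]
        rfl
      refine ⟨f, hLip, fun j => ?_⟩
      have hz : ∑ i, (r i * dist (x i) (y i) - r i * (f (x i) - f (y i))) = 0 := by
        rw [Finset.sum_sub_distrib, hsum_eq, sub_self]
      have hterm := (Finset.sum_eq_zero_iff_of_nonneg
        (fun i _ => sub_nonneg.mpr (mul_le_mul_of_nonneg_left (hle i) (h.1 i).le))).mp hz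
        j (Finset.mem_univ j)
      rw [← mul_sub] at hterm
      rcases mul_eq_zero.mp hterm with hr0 | hd0
      · exact absurd hr0 (h.1 j).ne'
      · linarith
  · -- backward direction
    rintro ⟨f, hf, heq⟩
    refine le_antisymm ?_ (csInf_le (costSet_bddBelow μ) hmem)
    rw [tcNorm_eq]
    refine le_csInf ⟨_, hmem⟩ ?_
    rintro c ⟨m', s, u, v, hrep, rfl⟩
    classical
    set T := ((Finset.univ.image x ∪ Finset.univ.image y) ∪ Finset.univ.image u)
      ∪ Finset.univ.image v with hT
    have hxT : ∀ j, x j ∈ T := fun j => by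
      simp only [hT, Finset.mem_union, Finset.mem_image]
      exact Or.inl (Or.inl (Or.inl ⟨j, Finset.mem_univ j, rfl⟩))
    have hyT : ∀ j, y j ∈ T := fun j => by
      simp only [hT, Finset.mem_union, Finset.mem_image]
      exact Or.inl (Or.inl (Or.inr ⟨j, Finset.mem_univ j, rfl⟩))
    have huT : ∀ j, u j ∈ T := fun j => by
      simp only [hT, Finset.mem_union, Finset.mem_image]
      exact Or.inl (Or.inr ⟨j, Finset.mem_univ j, rfl⟩)
    have hvT : ∀ j, v j ∈ T := fun j => by
      simp only [hT, Finset.mem_union, Finset.mem_image]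
      exact Or.inr ⟨j, Finset.mem_univ j, rfl⟩
    have h1 := pairing h f T hxT hyT
    have h2 := pairing hrep f T huT hvT
    calc molCost dist r x y = ∑ j, r j * (f (x j) - f (y j)) :=
          Finset.sum_congr rfl fun j _ => by rw [heq j]
      _ = ∑ j, s j * (f (u j) - f (v j)) := h1.trans h2.symm
      _ ≤ molCost dist s u v := by
          refine Finset.sum_le_sum fun j _ => ?_
          refine mul_le_mul_of_nonneg_left ?_ (hrep.1 j).le
          have hd := hf.dist_le_mul (u j) (v j)
          rw [NNReal.coe_one, one_mul, Real.dist_eq] at hd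
          exact (le_abs_self _).trans hd
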